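/- arXiv:2307.14163 — 2 statements merged into one kernel-verified Lean document; each statement's English description precedes it below -/
import Mathlib

section
/- The function g(x) = log(Γ(2x+1)) + log(sin(πx)) satisfies g''(x) < 0 for every x in (0,1); i.e., x ↦ Γ(2x+1)·sin(πx) is strictly log-concave on (0,1). -/
open Real Filter Set Finset Topology

noncomputable def trig (x : ℝ) : ℝ := ∑' n : ℕ, 1 / (x + n) ^ 2

noncomputable def digam (x : ℝ) : ℝ :=
  -Real.eulerMascheroniConstant + ∑' n : ℕ, (1 / ((n : ℝ) + 1) - 1 / (x + n))

lemma base_summable : Summable (fun n : ℕ => 1 / ((n : ℝ) + 1) ^ 2) := by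
  have h := (Real.summable_one_div_nat_pow (p := 2)).mpr one_lt_two
  have h2 := (summable_nat_add_iff 1).mpr h
  refine h2.congr fun n => by push_cast; ring

lemma shift_bound {a : ℝ} (ha : 0 < a) (n : ℕ) : min a 1 * ((n : ℝ) + 1) ≤ a + n := by
  have h1 : min a 1 ≤ a := min_le_left _ _
  have h2 : min a 1 ≤ 1 := min_le_right _ _
  have h3 : (0 : ℝ) ≤ n := n.cast_nonneg
  nlinarith

lemma trig_summable {a : ℝ} (ha : 0 < a) : Summable (fun n : ℕ => 1 / (a + n) ^ 2) := by
  have hc : 0 < min a 1 := lt_min ha one_pos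
  refine Summable.of_nonneg_of_le (fun n => by positivity) (fun n => ?_)
    (base_summable.mul_left (1 / (min a 1) ^ 2))
  have h := shift_bound ha n
  have hn : (0 : ℝ) < (n : ℝ) + 1 := by positivity
  have han : (0 : ℝ) < a + n := by positivity
  calc 1 / (a + n) ^ 2 ≤ 1 / (min a 1 * ((n : ℝ) + 1)) ^ 2 := by
        apply one_div_le_one_div_of_le (by positivity)
        exact pow_le_pow_left₀ (by positivity) h 2
    _ = 1 / (min a 1) ^ 2 * (1 / ((n : ℝ) + 1) ^ 2) := by
        rw [mul_pow, one_div_mul_one_div]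

lemma digam_term_eq {x : ℝ} (hx : 0 < x) (n : ℕ) :
    1 / ((n : ℝ) + 1) - 1 / (x + n) = (x - 1) / (((n : ℝ) + 1) * (x + n)) := by
  have h1 : (0 : ℝ) < (n : ℝ) + 1 := by positivity
  have h2 : (0 : ℝ) < x + n := by positivity
  field_simp
  ring

lemma digam_term_bound {x c : ℝ} (hx : 0 < x) (hc : 0 < c) (hc1 : c ≤ min x 1)
    {B : ℝ} (hB : |x - 1| ≤ B) (n : ℕ) :
    |1 / ((n : ℝ) + 1) - 1 / (x + n)| ≤ B / c * (1 / ((n : ℝ) + 1) ^ 2) := by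
  have h1 : (0 : ℝ) < (n : ℝ) + 1 := by positivity
  have h2 : (0 : ℝ) < x + n := by positivity
  have key : c * ((n : ℝ) + 1) ≤ x + n := by
    have := shift_bound hx n
    have : c * ((n : ℝ) + 1) ≤ min x 1 * ((n : ℝ) + 1) := by nlinarith
    linarith [shift_bound hx n]
  rw [digam_term_eq hx, abs_div,
    abs_of_pos (show (0:ℝ) < ((n:ℝ) + 1) * (x + n) by positivity)]
  have hBnn : 0 ≤ B := le_trans (abs_nonneg _) hB
  rw [div_le_iff₀ (by positivity)]
  have e : B / c * (1 / ((n : ℝ) + 1) ^ 2) * (((n : ℝ) + 1) * (x + n))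
      = B * ((x + n) / (c * ((n:ℝ)+1))) := by
    field_simp
  rw [e]
  have h3 : (1:ℝ) ≤ (x + n) / (c * ((n:ℝ)+1)) := by
    rw [le_div_iff₀ (by positivity)]
    linarith
  nlinarith [abs_nonneg (x-1), le_trans (le_abs_self (x-1)) hB]

lemma digam_summable {x : ℝ} (hx : 0 < x) :
    Summable (fun n : ℕ => 1 / ((n : ℝ) + 1) - 1 / (x + n)) := by
  have hc : 0 < min x 1 := lt_min hx one_pos
  refine Summable.of_norm_bounded (base_summable.mul_left (|x - 1| / min x 1)) (fun n => ?_)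
  simpa [Real.norm_eq_abs] using digam_term_bound hx hc le_rfl (le_refl |x - 1|) n

section deriv

/-- partial sums of the digamma-type series -/
noncomputable def pfun (n : ℕ) (x : ℝ) : ℝ :=
  ∑ m ∈ Finset.range (n + 1), (1 / ((m : ℝ) + 1) - 1 / (x + m))

/-- partial sums of the trigamma series -/
noncomputable def qfun (n : ℕ) (x : ℝ) : ℝ :=
  ∑ m ∈ Finset.range (n + 1), 1 / (x + m) ^ 2

lemma hasDerivAt_pfun (n : ℕ) {x : ℝ} (hx : 0 < x) :
    HasDerivAt (pfun n) (qfun n x) x := by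
  unfold pfun qfun
  apply HasDerivAt.fun_sum
  intro m _
  have hxm : x + (m : ℝ) ≠ 0 := by positivity
  have h1 : HasDerivAt (fun y : ℝ => y + (m : ℝ)) 1 x := (hasDerivAt_id x).add_const _
  have h2 : HasDerivAt (fun y : ℝ => (y + (m : ℝ))⁻¹) (-1 / (x + m) ^ 2) x := by
    simpa using h1.fun_inv hxm
  have h3 : HasDerivAt (fun y : ℝ => 1 / ((m : ℝ) + 1) - (y + (m : ℝ))⁻¹)
      (1 / (x + m) ^ 2) x := by
    simpa [neg_div] using h2.const_sub (1 / ((m : ℝ) + 1))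
  simpa [one_div] using h3

lemma pfun_tendsto {x : ℝ} (hx : 0 < x) :
    Tendsto (fun n => pfun n x) atTop (𝓝 (∑' n : ℕ, (1 / ((n : ℝ) + 1) - 1 / (x + n)))) := by
  have h := (digam_summable hx).hasSum.tendsto_sum_nat
  exact h.comp (tendsto_add_atTop_nat 1)

lemma qfun_tendstoUniformlyOn {a b : ℝ} (ha : 0 < a) :
    TendstoUniformlyOn qfun trig atTop (Set.Ioo a b) := by
  have base : TendstoUniformlyOn (fun N (x : ℝ) => ∑ n ∈ Finset.range N, 1 / (x + (n:ℝ)) ^ 2)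
      trig atTop (Set.Ioo a b) := by
    apply tendstoUniformlyOn_tsum_nat (trig_summable ha)
    intro n y hy
    have hy1 : a < y := hy.1
    have h0n : (0:ℝ) ≤ (n:ℝ) := n.cast_nonneg
    have hyn : (0:ℝ) < y + n := by linarith
    rw [Real.norm_eq_abs, abs_of_pos (one_div_pos.mpr (pow_pos hyn 2))]
    apply one_div_le_one_div_of_le (by positivity)
    have : (0:ℝ) ≤ (n:ℝ) := n.cast_nonneg
    nlinarith
  exact fun v hv => (tendsto_add_atTop_nat 1).eventually (base v hv)

lemma hasDerivAt_P {x : ℝ} (hx : 0 < x) :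
    HasDerivAt (fun y : ℝ => ∑' n : ℕ, (1 / ((n : ℝ) + 1) - 1 / (y + n))) (trig x) x := by
  have hx2 : 0 < x / 2 := by linarith
  apply hasDerivAt_of_tendstoUniformlyOn (isOpen_Ioo (a := x/2) (b := x+1))
      (qfun_tendstoUniformlyOn hx2)
  · exact Filter.Eventually.of_forall fun n y hy => hasDerivAt_pfun n (lt_trans hx2 hy.1)
  · exact fun y hy => pfun_tendsto (lt_trans hx2 hy.1)
  · exact ⟨by linarith, by linarith⟩

lemma hasDerivAt_digam {x : ℝ} (hx : 0 < x) : HasDerivAt digam (trig x) x := by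
  unfold digam
  exact (hasDerivAt_P hx).const_add _

end deriv

noncomputable def dfun (n : ℕ) (x : ℝ) : ℝ :=
  Real.log n - ∑ m ∈ Finset.range (n + 1), 1 / (x + m)

noncomputable def cseq (n : ℕ) : ℝ :=
  Real.log n - ∑ m ∈ Finset.range (n + 1), 1 / ((m : ℝ) + 1)

lemma cseq_eq (n : ℕ) : cseq n = Real.log n - (harmonic (n + 1) : ℝ) := by
  unfold cseq
  congr 1
  rw [harmonic]
  push_cast
  exact Finset.sum_congr rfl fun m _ => by rw [one_div]

lemma cseq_tendsto : Tendsto cseq atTop (𝓝 (-Real.eulerMascheroniConstant)) := by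
  have h1 : Tendsto (fun n : ℕ => (harmonic (n+1) : ℝ) - Real.log ((n+1 : ℕ) : ℝ)) atTop
      (𝓝 Real.eulerMascheroniConstant) :=
    Real.tendsto_harmonic_sub_log.comp (tendsto_add_atTop_nat 1)
  have h2 : Tendsto (fun n : ℕ => Real.log ((n:ℝ)+1) - Real.log n) atTop (𝓝 0) := by
    have hone : Tendsto (fun n : ℕ => 1 + 1/(n:ℝ)) atTop (𝓝 1) := by
      simpa using tendsto_const_nhds.add (tendsto_one_div_atTop_nhds_zero_nat : Tendsto (fun n : ℕ => 1 / (n:ℝ)) atTop (𝓝 0))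
    have hlog : Tendsto (fun n : ℕ => Real.log (1 + 1/(n:ℝ))) atTop (𝓝 0) := by
      have := (Real.continuousAt_log one_ne_zero).tendsto.comp hone
      simpa [Function.comp_def] using this
    apply hlog.congr'
    filter_upwards [eventually_ge_atTop 1] with n hn
    have hn0 : (0:ℝ) < n := by exact_mod_cast hn
    rw [← Real.log_div (by positivity) (ne_of_gt hn0)]
    congr 1
    field_simp
  have h3 : Tendsto (fun n : ℕ => -((harmonic (n+1) : ℝ) - Real.log ((n+1 : ℕ) : ℝ))
      - (Real.log ((n:ℝ)+1) - Real.log n)) atTop (𝓝 (-Real.eulerMascheroniConstant - 0)) := by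
    exact (h1.neg).sub h2
  rw [sub_zero] at h3
  apply h3.congr
  intro n
  rw [cseq_eq]
  push_cast
  ring

lemma dfun_eq (n : ℕ) (y : ℝ) : dfun n y = cseq n + pfun n y := by
  unfold dfun cseq pfun
  rw [Finset.sum_sub_distrib]
  ring

lemma pfun_tendstoUniformlyOn {a b : ℝ} (ha : 0 < a) :
    TendstoUniformlyOn pfun (fun y => ∑' n : ℕ, (1 / ((n : ℝ) + 1) - 1 / (y + n)))
      atTop (Set.Ioo a b) := by
  set c := min a 1 with hc
  have hc0 : 0 < c := lt_min ha one_pos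
  set B := |b| + 1 with hB
  have base : TendstoUniformlyOn
      (fun N (y : ℝ) => ∑ n ∈ Finset.range N, (1 / ((n : ℝ) + 1) - 1 / (y + n)))
      (fun y => ∑' n : ℕ, (1 / ((n : ℝ) + 1) - 1 / (y + n))) atTop (Set.Ioo a b) := by
    apply tendstoUniformlyOn_tsum_nat (base_summable.mul_left (B / c))
    intro n y hy
    have hy0 : 0 < y := lt_trans ha hy.1
    have hcy : c ≤ min y 1 := by
      apply le_min _ (min_le_right a 1)
      exact le_trans (min_le_left a 1) (le_of_lt hy.1)
    have hyB : |y - 1| ≤ B := by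
      rw [abs_le]
      constructor
      · simp only [hB]
        nlinarith [abs_nonneg b]
      · have : y < b := hy.2
        have : y - 1 ≤ |b| := le_trans (by linarith) (le_abs_self b)
        linarith
    rw [Real.norm_eq_abs]
    exact digam_term_bound hy0 hc0 hcy hyB n
  exact fun v hv => (tendsto_add_atTop_nat 1).eventually (base v hv)

lemma dfun_tendstoUniformlyOn {a b : ℝ} (ha : 0 < a) :
    TendstoUniformlyOn dfun digam atTop (Set.Ioo a b) := by
  have h1 : TendstoUniformlyOn (fun n (_ : ℝ) => cseq n)
      (fun _ => -Real.eulerMascheroniConstant) atTop (Set.Ioo a b) :=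
    cseq_tendsto.tendstoUniformlyOn_const _
  have h2 := pfun_tendstoUniformlyOn (b := b) ha
  have h3 := h1.add h2
  apply h3.congr
  filter_upwards with n
  intro y _
  exact (dfun_eq n y).symm

lemma hasDerivAt_logGammaSeq (n : ℕ) {y : ℝ} (hy : 0 < y) :
    HasDerivAt (fun z => Real.BohrMollerup.logGammaSeq z n) (dfun n y) y := by
  simp only [Real.BohrMollerup.logGammaSeq]
  unfold dfun
  have hsum : HasDerivAt (fun z : ℝ => ∑ m ∈ Finset.range (n + 1), Real.log (z + m))
      (∑ m ∈ Finset.range (n + 1), 1 / (y + m)) y := by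
    apply HasDerivAt.fun_sum
    intro m _
    have hm : (0:ℝ) < y + m := by positivity
    have h1 : HasDerivAt (fun z : ℝ => z + (m : ℝ)) 1 y := (hasDerivAt_id y).add_const _
    have := (Real.hasDerivAt_log (ne_of_gt hm)).comp y h1
    simpa [one_div, Function.comp_def] using this
  have hlin : HasDerivAt (fun z : ℝ => z * Real.log n + Real.log (Nat.factorial n : ℝ)) (Real.log n) y := by
    simpa using (hasDerivAt_mul_const (Real.log (n:ℝ))).add_const (Real.log (Nat.factorial n : ℝ))
  exact hlin.sub hsum

lemma hasDerivAt_logGamma {x : ℝ} (hx : 0 < x) :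
    HasDerivAt (fun y => Real.log (Real.Gamma y)) (digam x) x := by
  have hx2 : 0 < x / 2 := by linarith
  apply hasDerivAt_of_tendstoUniformlyOn (isOpen_Ioo (a := x/2) (b := x+1))
      (dfun_tendstoUniformlyOn hx2)
  · exact Filter.Eventually.of_forall fun n y hy => hasDerivAt_logGammaSeq n (lt_trans hx2 hy.1)
  · exact fun y hy => Real.BohrMollerup.tendsto_log_gamma (lt_trans hx2 hy.1)
  · exact ⟨by linarith, by linarith⟩

lemma trig_rec {v : ℝ} (hv : 0 < v) : trig v = 1 / v ^ 2 + trig (v + 1) := by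
  unfold trig
  rw [Summable.tsum_eq_zero_add (trig_summable hv)]
  congr 1
  · norm_num
  · exact tsum_congr fun n => by push_cast; ring_nf

lemma trig_nonneg (v : ℝ) : 0 ≤ trig v := tsum_nonneg fun n => by positivity

lemma trig_ge {v : ℝ} (hv : 0 < v) : 1 / v ^ 2 ≤ trig v := by
  rw [trig_rec hv]
  linarith [trig_nonneg (v + 1)]

set_option maxHeartbeats 1000000 in
lemma trig_split {x : ℝ} (hx : 0 < x) :
    4 * trig (2 * x + 1) = trig (x + 1 / 2) + trig (x + 1) := by
  have hhalf : 0 < x + 1 / 2 := by linarith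
  have hone : 0 < x + 1 := by linarith
  have he : Summable (fun k : ℕ => 4 * (1 / (2 * x + 1 + (2 * k : ℕ)) ^ 2)) := by
    apply Summable.mul_left
    apply ((trig_summable hhalf).mul_left (1 / 4)).congr
    intro k
    have h2 : (2 : ℝ) * x + 1 + (2 * k : ℕ) = 2 * (x + 1 / 2 + k) := by push_cast; ring
    rw [h2, mul_pow]
    have : (x + 1 / 2 + (k : ℝ)) ≠ 0 := by positivity
    field_simp
    norm_num
  have ho : Summable (fun k : ℕ => 4 * (1 / (2 * x + 1 + (2 * k + 1 : ℕ)) ^ 2)) := by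
    apply Summable.mul_left
    apply ((trig_summable hone).mul_left (1 / 4)).congr
    intro k
    have h2 : (2 : ℝ) * x + 1 + (2 * k + 1 : ℕ) = 2 * (x + 1 + k) := by push_cast; ring
    rw [h2, mul_pow]
    have : (x + 1 + (k : ℝ)) ≠ 0 := by positivity
    field_simp
    norm_num
  have hsplit := tsum_even_add_odd (f := fun n : ℕ => 4 * (1 / (2 * x + 1 + (n:ℝ)) ^ 2)) he ho
  have h4 : 4 * trig (2 * x + 1) = ∑' n : ℕ, 4 * (1 / (2 * x + 1 + n) ^ 2) := by
    rw [trig, tsum_mul_left]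
  rw [h4, ← hsplit]
  congr 1
  · apply tsum_congr
    intro k
    beta_reduce
    have h2 : (2 : ℝ) * x + 1 + (2 * k : ℕ) = 2 * (x + 1 / 2 + k) := by push_cast; ring
    rw [h2, mul_pow]
    have h0 : (x + 1 / 2 + (k : ℝ)) ≠ 0 := by positivity
    field_simp
    ring
  · apply tsum_congr
    intro k
    beta_reduce
    have h2 : (2 : ℝ) * x + 1 + (2 * k + 1 : ℕ) = 2 * (x + 1 + k) := by push_cast; ring
    rw [h2, mul_pow]
    have h0 : (x + 1 + (k : ℝ)) ≠ 0 := by positivity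
    field_simp
    ring

lemma partial_bound {u : ℝ} (hu : 0 < u) (N : ℕ) :
    ∑ m ∈ Finset.range N, 1 / (u + 1 + m) ^ 2 ≤ 1 / u - 1 / (u + N) := by
  induction N with
  | zero => simp
  | succ N ih =>
      rw [Finset.sum_range_succ]
      have hN : (0:ℝ) ≤ (N:ℝ) := N.cast_nonneg
      have h1 : (0:ℝ) < u + N := by linarith
      have h2 : (0:ℝ) < u + N + 1 := by linarith
      have key : 1 / (u + 1 + N) ^ 2 ≤ 1 / (u + N) - 1 / (u + N + 1) := by
        have e : 1 / (u + N) - 1 / (u + N + 1) = 1 / ((u + N) * (u + N + 1)) := by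
          field_simp
          ring
        rw [e]
        apply one_div_le_one_div_of_le (by positivity)
        nlinarith
      have hcast : ((N + 1 : ℕ) : ℝ) = (N : ℝ) + 1 := by push_cast; ring
      rw [hcast, ← add_assoc]
      linarith

lemma trig_le {u : ℝ} (hu : 0 < u) : trig u ≤ 1 / u ^ 2 + 1 / u := by
  rw [trig_rec hu]
  have h : trig (u + 1) ≤ 1 / u := by
    apply Summable.tsum_le_of_sum_le (trig_summable (by linarith))
    intro s
    obtain ⟨N, hN⟩ := s.exists_nat_subset_range
    calc ∑ m ∈ s, 1 / (u + 1 + m) ^ 2 ≤ ∑ m ∈ Finset.range N, 1 / (u + 1 + m) ^ 2 := by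
          apply Finset.sum_le_sum_of_subset_of_nonneg hN
          intro m _ _
          positivity
      _ ≤ 1 / u - 1 / (u + N) := partial_bound hu N
      _ ≤ 1 / u := by
          have hN0 : (0:ℝ) ≤ (N:ℝ) := N.cast_nonneg
          have : (0:ℝ) < u + N := by linarith
          have : 0 ≤ 1 / (u + (N:ℝ)) := by positivity
          linarith
  linarith

lemma key_ineq {x : ℝ} (hx : x ∈ Set.Ioo (0:ℝ) 1) :
    4 * trig (2 * x + 1) - trig x - trig (1 - x) < 0 := by
  obtain ⟨hx0, hx1⟩ := hx
  have h1x : 0 < 1 - x := by linarith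
  rw [trig_split hx0, trig_rec hx0]
  have hA : trig (x + 1 / 2) ≤ 6 := by
    have h := trig_le (show 0 < x + 1/2 by linarith)
    have e1 : 1 / (x + 1/2) ^ 2 ≤ 4 := by
      rw [div_le_iff₀ (by positivity)]
      nlinarith
    have e2 : 1 / (x + 1/2) ≤ 2 := by
      rw [div_le_iff₀ (by positivity)]
      nlinarith
    linarith
  have hB : 1 / (1 - x) ^ 2 ≤ trig (1 - x) := trig_ge h1x
  have hC : 8 ≤ 1 / x ^ 2 + 1 / (1 - x) ^ 2 := by
    rw [div_add_div _ _ (by positivity) (by positivity), le_div_iff₀ (by positivity)]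
    nlinarith [sq_nonneg (x - 1/2), sq_nonneg (x * (1 - x) - 1/4), mul_pos hx0 h1x]
  linarith

noncomputable def Faux (y : ℝ) : ℝ :=
  Real.log Real.pi + (Real.log (Real.Gamma (2 * y + 1)) - Real.log (Real.Gamma y)
    - Real.log (Real.Gamma (1 - y)))

noncomputable def G1 (y : ℝ) : ℝ := 2 * digam (2 * y + 1) - digam y + digam (1 - y)

noncomputable def G2 (y : ℝ) : ℝ := 4 * trig (2 * y + 1) - trig y - trig (1 - y)

lemma f_eq_Faux {y : ℝ} (hy : y ∈ Set.Ioo (0:ℝ) 1) :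
    Real.log (Real.Gamma (2 * y + 1)) + Real.log (Real.sin (Real.pi * y)) = Faux y := by
  obtain ⟨hy0, hy1⟩ := hy
  have hsin : 0 < Real.sin (Real.pi * y) := by
    apply Real.sin_pos_of_pos_of_lt_pi (by positivity)
    nlinarith [Real.pi_pos]
  have hG1 : 0 < Real.Gamma y := Real.Gamma_pos_of_pos hy0
  have hG2 : 0 < Real.Gamma (1 - y) := Real.Gamma_pos_of_pos (by linarith)
  have hrefl := Real.Gamma_mul_Gamma_one_sub y
  have hsin_eq : Real.sin (Real.pi * y) = Real.pi / (Real.Gamma y * Real.Gamma (1 - y)) := by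
    rw [hrefl]
    field_simp
  rw [hsin_eq, Real.log_div (ne_of_gt Real.pi_pos) (by positivity),
    Real.log_mul (ne_of_gt hG1) (ne_of_gt hG2), Faux]
  ring

lemma hasDerivAt_Faux {y : ℝ} (hy : y ∈ Set.Ioo (0:ℝ) 1) : HasDerivAt Faux (G1 y) y := by
  obtain ⟨hy0, hy1⟩ := hy
  have hin1 : HasDerivAt (fun z : ℝ => 2 * z + 1) 2 y := by
    simpa using ((hasDerivAt_id y).const_mul 2).add_const 1
  have hin2 : HasDerivAt (fun z : ℝ => 1 - z) (-1) y := by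
    simpa using (hasDerivAt_id y).const_sub 1
  have h1 : HasDerivAt (fun z : ℝ => Real.log (Real.Gamma (2 * z + 1)))
      (digam (2 * y + 1) * 2) y := by
    have := (hasDerivAt_logGamma (show 0 < 2 * y + 1 by linarith)).comp y hin1
    simpa [Function.comp_def] using this
  have h2 : HasDerivAt (fun z : ℝ => Real.log (Real.Gamma z)) (digam y) y :=
    hasDerivAt_logGamma hy0
  have h3 : HasDerivAt (fun z : ℝ => Real.log (Real.Gamma (1 - z)))
      (digam (1 - y) * (-1)) y := by
    have := (hasDerivAt_logGamma (show 0 < 1 - y by linarith)).comp y hin2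
    simpa [Function.comp_def] using this
  have := (((h1.sub h2).sub h3).const_add (Real.log Real.pi))
  refine this.congr_deriv ?_
  unfold G1
  ring

lemma hasDerivAt_G1 {y : ℝ} (hy : y ∈ Set.Ioo (0:ℝ) 1) : HasDerivAt G1 (G2 y) y := by
  obtain ⟨hy0, hy1⟩ := hy
  have hin1 : HasDerivAt (fun z : ℝ => 2 * z + 1) 2 y := by
    simpa using ((hasDerivAt_id y).const_mul 2).add_const 1
  have hin2 : HasDerivAt (fun z : ℝ => 1 - z) (-1) y := by
    simpa using (hasDerivAt_id y).const_sub 1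
  have h1 : HasDerivAt (fun z : ℝ => digam (2 * z + 1)) (trig (2 * y + 1) * 2) y := by
    have := (hasDerivAt_digam (show 0 < 2 * y + 1 by linarith)).comp y hin1
    simpa [Function.comp_def] using this
  have h2 : HasDerivAt digam (trig y) y := hasDerivAt_digam hy0
  have h3 : HasDerivAt (fun z : ℝ => digam (1 - z)) (trig (1 - y) * (-1)) y := by
    have := (hasDerivAt_digam (show 0 < 1 - y by linarith)).comp y hin2
    simpa [Function.comp_def] using this
  have := ((h1.const_mul 2).sub h2).add h3
  refine this.congr_deriv ?_
  unfold G2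
  ring

theorem log_gamma_sin_concave :
    ∀ x ∈ Set.Ioo (0 : ℝ) 1,
      iteratedDeriv 2
        (fun x : ℝ => Real.log (Real.Gamma (2 * x + 1)) + Real.log (Real.sin (Real.pi * x)))
        x < 0 := by
  intro x hx
  set f : ℝ → ℝ :=
    fun x : ℝ => Real.log (Real.Gamma (2 * x + 1)) + Real.log (Real.sin (Real.pi * x)) with hf
  have hmem : ∀ᶠ y in 𝓝 x, y ∈ Set.Ioo (0:ℝ) 1 := isOpen_Ioo.eventually_mem hx
  have hfF : f =ᶠ[𝓝 x] Faux := hmem.mono fun y hy => f_eq_Faux hy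
  have hdF : deriv Faux =ᶠ[𝓝 x] G1 := hmem.mono fun y hy => (hasDerivAt_Faux hy).deriv
  have e1 : deriv f =ᶠ[𝓝 x] G1 := hfF.deriv.trans hdF
  have e2 : deriv (deriv f) x = deriv G1 x := e1.deriv_eq
  have e3 : deriv G1 x = G2 x := (hasDerivAt_G1 hx).deriv
  rw [show (2:ℕ) = 1 + 1 from rfl, iteratedDeriv_succ, iteratedDeriv_one]
  rw [e2, e3]
  exact key_ineq hx
end

section
/- Define D(x,y) = (Γ(2x+1)·sin(πx))^{1/2} · (Γ(2y+1)·sin(πy))^{1/2} / (2·Γ(x+y+1)·sin(π(x+y)/2)). Then for all x, y ∈ (0,1] with x ≠ y, 2·D(x,y) < 1. -/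
set_option maxHeartbeats 1000000

open Real MeasureTheory Set Filter intervalIntegral

noncomputable def Ifn (s : ℝ) : ℝ := ∫ t in Ioi (0:ℝ), (1 - Real.cos t) * t ^ (-1 - s)


lemma one_sub_cos_nonneg (t : ℝ) : 0 ≤ 1 - Real.cos t := by nlinarith [Real.cos_le_one t]

lemma one_sub_cos_le_sq (t : ℝ) : 1 - Real.cos t ≤ t ^ 2 / 2 := by
  have h := Real.abs_sin_half t
  have h2 : (1 - Real.cos t)/2 = |Real.sin (t/2)|^2 := by
    rw [h, Real.sq_sqrt]; nlinarith [Real.cos_le_one t]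
  have h3 : |Real.sin (t/2)| ≤ |t/2| := Real.abs_sin_le_abs
  have h4 : |Real.sin (t/2)|^2 ≤ |t/2|^2 := by
    exact pow_le_pow_left₀ (abs_nonneg _) h3 2
  have h5 : |t/2|^2 = t^2/4 := by rw [sq_abs]; ring
  nlinarith

lemma msble (s : ℝ) : Measurable (fun t : ℝ => (1 - Real.cos t) * t ^ (-1 - s)) :=
  (measurable_const.sub Real.continuous_cos.measurable).mul
    (measurable_id.pow_const _)

lemma Ifn_integrableOn {s : ℝ} (hs : s ∈ Ioo (0:ℝ) 2) :
    IntegrableOn (fun t : ℝ => (1 - Real.cos t) * t ^ (-1 - s)) (Ioi (0:ℝ)) := by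
  rw [← Ioc_union_Ioi_eq_Ioi (zero_le_one), integrableOn_union]
  constructor
  · have hbig : IntegrableOn (fun t : ℝ => t ^ (1 - s) / 2) (Ioc (0:ℝ) 1) := by
      have : IntervalIntegrable (fun t : ℝ => t ^ (1 - s)) volume 0 1 :=
        intervalIntegral.intervalIntegrable_rpow' (by linarith [hs.2])
      exact ((intervalIntegrable_iff_integrableOn_Ioc_of_le zero_le_one).mp this).div_const 2
    refine hbig.mono' (msble s).aestronglyMeasurable ?_
    filter_upwards [ae_restrict_mem measurableSet_Ioc] with t ht
    have ht0 : 0 < t := ht.1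
    rw [Real.norm_eq_abs, abs_mul, abs_of_nonneg (one_sub_cos_nonneg t),
      abs_of_nonneg (Real.rpow_nonneg ht0.le _)]
    calc (1 - Real.cos t) * t ^ (-1 - s) ≤ t ^ 2 / 2 * t ^ (-1 - s) := by
          exact mul_le_mul_of_nonneg_right (one_sub_cos_le_sq t) (Real.rpow_nonneg ht0.le _)
      _ = t ^ (1 - s) / 2 := by
          rw [div_mul_eq_mul_div, ← Real.rpow_two, ← Real.rpow_add ht0]
          norm_num
          congr 1
          ring
  · have hbig : IntegrableOn (fun t : ℝ => 2 * t ^ (-1 - s)) (Ioi (1:ℝ)) :=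
      (integrableOn_Ioi_rpow_of_lt (by linarith [hs.1]) zero_lt_one).const_mul 2
    refine hbig.mono' (msble s).aestronglyMeasurable ?_
    filter_upwards [ae_restrict_mem measurableSet_Ioi] with t ht
    have ht0 : (0:ℝ) < t := lt_trans zero_lt_one ht
    rw [Real.norm_eq_abs, abs_mul, abs_of_nonneg (one_sub_cos_nonneg t),
      abs_of_nonneg (Real.rpow_nonneg ht0.le _)]
    have : 1 - Real.cos t ≤ 2 := by nlinarith [Real.neg_one_le_cos t]
    exact mul_le_mul_of_nonneg_right this (Real.rpow_nonneg ht0.le _)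

lemma Ifn_pos {s : ℝ} (hs : s ∈ Ioo (0:ℝ) 2) : 0 < Ifn s := by
  rw [Ifn, setIntegral_pos_iff_support_of_nonneg_ae]
  · refine lt_of_lt_of_le ?_ (measure_mono (?_ : Ioo (π/2) π ⊆ _))
    · rw [Real.volume_Ioo]
      simp only [ENNReal.ofReal_pos]
      linarith [Real.pi_pos]
    · intro t ht
      have hπ := Real.pi_pos
      have ht0 : 0 < t := lt_trans (by linarith) ht.1
      have hct : Real.cos t < 1 := by
        have := Real.cos_nonpos_of_pi_div_two_le_of_le ht.1.le (by linarith [ht.2])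
        linarith
      constructor
      · simp only [Function.mem_support]
        have h1 : 0 < 1 - Real.cos t := by linarith
        have h2 : 0 < t ^ (-1 - s) := Real.rpow_pos_of_pos ht0 _
        positivity
      · exact ht0
  · filter_upwards [ae_restrict_mem measurableSet_Ioi] with t ht
    exact mul_nonneg (one_sub_cos_nonneg t) (Real.rpow_nonneg (le_of_lt ht) _)
  · exact Ifn_integrableOn hs



lemma laplace_one_sub_cos {s : ℝ} (hs : 0 < s) :
    ∫ t in Ioi (0:ℝ), (1 - Real.cos t) * Real.exp (-(s * t))
      = 1 / s - s / (s ^ 2 + 1) := by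
  set F : ℝ → ℝ := fun t => -Real.exp (-(s * t)) / s
      - Real.exp (-(s * t)) * (Real.sin t - s * Real.cos t) / (s ^ 2 + 1) with hF
  have hs1 : (s:ℝ)^2 + 1 ≠ 0 := by positivity
  have hderiv : ∀ t : ℝ, HasDerivAt F ((1 - Real.cos t) * Real.exp (-(s * t))) t := by
    intro t
    have he : HasDerivAt (fun t : ℝ => Real.exp (-(s * t))) (-s * Real.exp (-(s*t))) t := by
      have h1 : HasDerivAt (fun t : ℝ => -(s * t)) (-s) t := by
        exact (((hasDerivAt_id t).const_mul s).neg).congr_deriv (by ring)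
      simpa [mul_comm] using h1.exp
    have htrig : HasDerivAt (fun t : ℝ => Real.sin t - s * Real.cos t)
        (Real.cos t + s * Real.sin t) t := by
      have := (Real.hasDerivAt_sin t).sub ((Real.hasDerivAt_cos t).const_mul s)
      exact this.congr_deriv (by ring)
    have h2 : HasDerivAt (fun t => Real.exp (-(s * t)) * (Real.sin t - s * Real.cos t))
        ((-s * Real.exp (-(s*t))) * (Real.sin t - s * Real.cos t)
          + Real.exp (-(s * t)) * (Real.cos t + s * Real.sin t)) t := he.mul htrig
    have h3 := ((he.neg.div_const s).sub (h2.div_const (s^2+1)))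
    refine h3.congr_deriv ?_
    field_simp
    ring
  have htend : Tendsto F atTop (nhds 0) := by
    have h0 : Tendsto (fun t : ℝ => Real.exp (-(s * t))) atTop (nhds 0) := by
      have : Tendsto (fun t : ℝ => -(s * t)) atTop atBot := by
        exact tendsto_neg_atTop_atBot.comp (tendsto_id.const_mul_atTop hs)
      exact Real.tendsto_exp_atBot.comp this
    have hC : Tendsto (fun t : ℝ => (1/s + (1+s)/(s^2+1)) * Real.exp (-(s * t))) atTop (nhds 0) := by
      simpa using h0.const_mul (1/s + (1+s)/(s^2+1))
    refine squeeze_zero_norm (fun t => ?_) hC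
    have hb : |Real.sin t - s * Real.cos t| ≤ 1 + s := by
      calc |Real.sin t - s * Real.cos t| ≤ |Real.sin t| + |s * Real.cos t| := abs_sub _ _
        _ ≤ 1 + s := by
            rw [abs_mul, abs_of_pos hs]
            have := Real.abs_sin_le_one t
            have := Real.abs_cos_le_one t
            nlinarith
    have he : (0:ℝ) ≤ Real.exp (-(s*t)) := (Real.exp_pos _).le
    rw [hF]
    have h1 : |(-Real.exp (-(s * t)) / s - Real.exp (-(s * t)) * (Real.sin t - s * Real.cos t) / (s ^ 2 + 1))|
        ≤ Real.exp (-(s*t)) / s + Real.exp (-(s*t)) * (1+s) / (s^2+1) := by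
      calc |(-Real.exp (-(s * t)) / s - Real.exp (-(s * t)) * (Real.sin t - s * Real.cos t) / (s ^ 2 + 1))|
          ≤ |(-Real.exp (-(s * t)) / s)| + |Real.exp (-(s * t)) * (Real.sin t - s * Real.cos t) / (s ^ 2 + 1)| := abs_sub _ _
        _ ≤ Real.exp (-(s*t)) / s + Real.exp (-(s*t)) * (1+s) / (s^2+1) := by
            rw [abs_div, abs_neg, abs_of_nonneg he, abs_div, abs_mul, abs_of_nonneg he,
              abs_of_pos hs, abs_of_pos (by positivity : (0:ℝ) < s^2+1)]
            gcongr
    rw [Real.norm_eq_abs]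
    calc _ ≤ _ := h1
      _ = (1/s + (1+s)/(s^2+1)) * Real.exp (-(s * t)) := by ring
  have hint : IntegrableOn (fun t : ℝ => (1 - Real.cos t) * Real.exp (-(s * t))) (Ioi 0) := by
    refine ((exp_neg_integrableOn_Ioi 0 hs).const_mul 2).mono'
      ((measurable_const.sub Real.continuous_cos.measurable).mul
        (Real.continuous_exp.comp (continuous_const.mul continuous_id).neg).measurable).aestronglyMeasurable ?_
    filter_upwards [ae_restrict_mem measurableSet_Ioi] with t _
    rw [Real.norm_eq_abs, abs_mul, abs_of_nonneg (by nlinarith [Real.cos_le_one t] : (0:ℝ) ≤ 1 - Real.cos t),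
      abs_of_nonneg (Real.exp_nonneg _)]
    have : 1 - Real.cos t ≤ 2 := by nlinarith [Real.neg_one_le_cos t]
    calc (1 - Real.cos t) * Real.exp (-(s*t)) ≤ 2 * Real.exp (-(s*t)) :=
          mul_le_mul_of_nonneg_right this (Real.exp_nonneg _)
      _ = 2 * Real.exp (-s*t) := by rw [neg_mul]
  have := integral_Ioi_of_hasDerivAt_of_tendsto
    (f := F) (a := 0) (hderiv 0).continuousAt.continuousWithinAt
    (fun x _ => hderiv x) hint htend
  rw [this, hF]
  simp only [mul_zero, neg_zero, Real.exp_zero, Real.sin_zero, Real.cos_zero]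
  field_simp
  ring



lemma J_integrableOn {a : ℝ} (ha : a ∈ Ioo (0:ℝ) 2) :
    IntegrableOn (fun s : ℝ => s ^ (a - 1) / (1 + s ^ 2)) (Ioi (0:ℝ)) := by
  have hm : Measurable (fun s : ℝ => s ^ (a - 1) / (1 + s ^ 2)) :=
    (measurable_id.pow_const _).div ((measurable_const.add (measurable_id.pow measurable_const)))
  rw [← Ioc_union_Ioi_eq_Ioi (zero_le_one), integrableOn_union]
  constructor
  · have hbig : IntegrableOn (fun s : ℝ => s ^ (a - 1)) (Ioc (0:ℝ) 1) := by
      have : IntervalIntegrable (fun t : ℝ => t ^ (a - 1)) volume 0 1 :=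
        intervalIntegral.intervalIntegrable_rpow' (by linarith [ha.1])
      exact (intervalIntegrable_iff_integrableOn_Ioc_of_le zero_le_one).mp this
    refine hbig.mono' hm.aestronglyMeasurable ?_
    filter_upwards [ae_restrict_mem measurableSet_Ioc] with t ht
    rw [Real.norm_eq_abs, abs_div, abs_of_nonneg (Real.rpow_nonneg ht.1.le _),
      abs_of_pos (by positivity : (0:ℝ) < 1 + t^2)]
    rw [div_le_iff₀ (by positivity)]
    nlinarith [Real.rpow_nonneg ht.1.le (a-1), sq_nonneg t]
  · have hbig : IntegrableOn (fun s : ℝ => s ^ (a - 3)) (Ioi (1:ℝ)) :=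
      integrableOn_Ioi_rpow_of_lt (by linarith [ha.2]) zero_lt_one
    refine hbig.mono' hm.aestronglyMeasurable ?_
    filter_upwards [ae_restrict_mem measurableSet_Ioi] with t ht
    have ht0 : (0:ℝ) < t := lt_trans zero_lt_one ht
    rw [Real.norm_eq_abs, abs_div, abs_of_nonneg (Real.rpow_nonneg ht0.le _),
      abs_of_pos (by positivity : (0:ℝ) < 1 + t^2)]
    rw [div_le_iff₀ (by positivity)]
    have h1 : t ^ (a - 3) * t^2 = t ^ (a-1) := by
      rw [← Real.rpow_two, ← Real.rpow_add ht0]; norm_num; congr 1; ring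
    nlinarith [Real.rpow_nonneg ht0.le (a-3)]



lemma laplace_integrand_integrable {s : ℝ} (hs : 0 < s) :
    IntegrableOn (fun t : ℝ => (1 - Real.cos t) * Real.exp (-(s * t))) (Ioi (0:ℝ)) := by
  refine ((exp_neg_integrableOn_Ioi 0 hs).const_mul 2).mono'
    ((measurable_const.sub Real.continuous_cos.measurable).mul
      (Real.continuous_exp.comp (continuous_const.mul continuous_id).neg).measurable).aestronglyMeasurable ?_
  filter_upwards [ae_restrict_mem measurableSet_Ioi] with t _
  rw [Real.norm_eq_abs, abs_mul,
    abs_of_nonneg (by nlinarith [Real.cos_le_one t] : (0:ℝ) ≤ 1 - Real.cos t),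
    abs_of_nonneg (Real.exp_nonneg _)]
  have h2 : 1 - Real.cos t ≤ 2 := by nlinarith [Real.neg_one_le_cos t]
  calc (1 - Real.cos t) * Real.exp (-(s*t)) ≤ 2 * Real.exp (-(s*t)) :=
        mul_le_mul_of_nonneg_right h2 (Real.exp_nonneg _)
    _ = 2 * Real.exp (-s*t) := by rw [neg_mul]

lemma hsecval {a : ℝ} (ha : a ∈ Ioo (0:ℝ) 2) {s : ℝ} (hs : 0 < s) :
    (∫ t in Ioi (0:ℝ), s ^ a * ((1 - Real.cos t) * Real.exp (-(s * t))))
      = s ^ (a - 1) / (1 + s ^ 2) := by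
  rw [MeasureTheory.integral_const_mul, laplace_one_sub_cos hs]
  have h2 : 1 / s - s / (s ^ 2 + 1) = 1 / s * (1 / (1 + s^2)) := by
    field_simp; ring
  rw [h2, ← mul_assoc]
  have h3 : s ^ a * (1/s) = s ^ (a - 1) := by
    rw [Real.rpow_sub hs, Real.rpow_one]; ring
  rw [h3, ← div_eq_mul_one_div]

lemma integrand_nonneg {a : ℝ} (ha : 0 < a) (s t : ℝ) (hs : 0 ≤ s) :
    0 ≤ s ^ a * ((1 - Real.cos t) * Real.exp (-(s * t))) := by
  have h1 : (0:ℝ) ≤ 1 - Real.cos t := by nlinarith [Real.cos_le_one t]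
  positivity

lemma H_integrable {a : ℝ} (ha : a ∈ Ioo (0:ℝ) 2) :
    Integrable (fun p : ℝ × ℝ => p.1 ^ a * ((1 - Real.cos p.2) * Real.exp (-(p.1 * p.2))))
      ((volume.restrict (Ioi (0:ℝ))).prod (volume.restrict (Ioi (0:ℝ)))) := by
  have hHm : AEStronglyMeasurable
      (fun p : ℝ × ℝ => p.1 ^ a * ((1 - Real.cos p.2) * Real.exp (-(p.1 * p.2))))
      ((volume.restrict (Ioi (0:ℝ))).prod (volume.restrict (Ioi (0:ℝ)))) := by
    apply Measurable.aestronglyMeasurable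
    exact (measurable_fst.pow measurable_const).mul
      ((measurable_const.sub (Real.continuous_cos.measurable.comp measurable_snd)).mul
        (Real.continuous_exp.measurable.comp (measurable_fst.mul measurable_snd).neg))
  rw [MeasureTheory.integrable_prod_iff hHm]
  constructor
  · filter_upwards [ae_restrict_mem measurableSet_Ioi] with s hs
    exact ((laplace_integrand_integrable hs).const_mul (s ^ a))
  · apply MeasureTheory.Integrable.congr (J_integrableOn ha)
    filter_upwards [ae_restrict_mem measurableSet_Ioi] with s hs
    have hnn : ∀ t ∈ Ioi (0:ℝ), ‖s ^ a * ((1 - Real.cos t) * Real.exp (-(s * t)))‖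
        = s ^ a * ((1 - Real.cos t) * Real.exp (-(s * t))) := fun t _ =>
      Real.norm_of_nonneg (integrand_nonneg ha.1 s t (le_of_lt hs))
    rw [show (∫ t in Ioi (0:ℝ), ‖s ^ a * ((1 - Real.cos t) * Real.exp (-(s * t)))‖)
        = ∫ t in Ioi (0:ℝ), s ^ a * ((1 - Real.cos t) * Real.exp (-(s * t))) from
      setIntegral_congr_fun measurableSet_Ioi hnn, hsecval ha hs]

lemma fubini_one {a : ℝ} (ha : a ∈ Ioo (0:ℝ) 2) :
    Real.Gamma (a + 1) * Ifn a = ∫ s in Ioi (0:ℝ), s ^ (a - 1) / (1 + s ^ 2) := by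
  have swap := MeasureTheory.integral_integral_swap
    (f := fun s t : ℝ => s ^ a * ((1 - Real.cos t) * Real.exp (-(s * t))))
    (μ := volume.restrict (Ioi (0:ℝ))) (ν := volume.restrict (Ioi (0:ℝ)))
    (H_integrable ha)
  have hL : (∫ s, ∫ t, s ^ a * ((1 - Real.cos t) * Real.exp (-(s * t)))
        ∂(volume.restrict (Ioi (0:ℝ))) ∂(volume.restrict (Ioi (0:ℝ))))
      = ∫ s in Ioi (0:ℝ), s ^ (a - 1) / (1 + s ^ 2) :=
    setIntegral_congr_fun measurableSet_Ioi (fun s hs => hsecval ha hs)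
  have hR : (∫ t, ∫ s, s ^ a * ((1 - Real.cos t) * Real.exp (-(s * t)))
        ∂(volume.restrict (Ioi (0:ℝ))) ∂(volume.restrict (Ioi (0:ℝ))))
      = Real.Gamma (a + 1) * Ifn a := by
    have hinner : ∀ t ∈ Ioi (0:ℝ), (∫ s in Ioi (0:ℝ), s ^ a * ((1 - Real.cos t) * Real.exp (-(s * t))))
        = Real.Gamma (a + 1) * ((1 - Real.cos t) * t ^ (-1 - a)) := by
      intro t ht
      have ht0 : (0:ℝ) < t := ht
      have hcomm : ∀ s : ℝ, s ^ a * ((1 - Real.cos t) * Real.exp (-(s * t)))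
          = (1 - Real.cos t) * (s ^ (a + 1 - 1) * Real.exp (-(t * s))) := by
        intro s; rw [mul_comm s t]; ring_nf
      rw [setIntegral_congr_fun measurableSet_Ioi (fun s _ => hcomm s),
        MeasureTheory.integral_const_mul,
        Real.integral_rpow_mul_exp_neg_mul_Ioi (by linarith [ha.1]) ht0]
      have hpow : (1 / t) ^ (a + 1) = t ^ (-1 - a) := by
        rw [one_div, ← Real.rpow_neg_one t, ← Real.rpow_mul ht0.le]
        congr 1; ring
      rw [hpow]; ring
    rw [setIntegral_congr_fun measurableSet_Ioi hinner, MeasureTheory.integral_const_mul, Ifn]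
  rw [← hL, swap, hR]



lemma exp_section_integrable {s c : ℝ} (hc : 0 < c) :
    IntegrableOn (fun u : ℝ => s * Real.exp (-(c * u))) (Ioi (0:ℝ)) := by
  have h := (exp_neg_integrableOn_Ioi 0 hc).const_mul s
  simpa [neg_mul, IntegrableOn] using h

lemma exp_section_value {s c : ℝ} (hc : 0 < c) :
    (∫ u in Ioi (0:ℝ), s * Real.exp (-(c * u))) = s / c := by
  rw [MeasureTheory.integral_const_mul]
  have h : ∀ u ∈ Ioi (0:ℝ), Real.exp (-(c * u)) = u ^ ((1:ℝ) - 1) * Real.exp (-(c * u)) := by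
    intro u hu
    rw [sub_self, Real.rpow_zero, one_mul]
  rw [setIntegral_congr_fun measurableSet_Ioi h,
    Real.integral_rpow_mul_exp_neg_mul_Ioi zero_lt_one hc]
  rw [Real.rpow_one, Real.Gamma_one]
  field_simp

lemma H2_integrable {a : ℝ} (ha : a ∈ Ioo (0:ℝ) 2) :
    Integrable (fun p : ℝ × ℝ => p.1 ^ (a-1) * Real.exp (-((1 + p.1 ^ 2) * p.2)))
      ((volume.restrict (Ioi (0:ℝ))).prod (volume.restrict (Ioi (0:ℝ)))) := by
  have hHm : AEStronglyMeasurable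
      (fun p : ℝ × ℝ => p.1 ^ (a-1) * Real.exp (-((1 + p.1 ^ 2) * p.2)))
      ((volume.restrict (Ioi (0:ℝ))).prod (volume.restrict (Ioi (0:ℝ)))) := by
    apply Measurable.aestronglyMeasurable
    exact (measurable_fst.pow measurable_const).mul
      (Real.continuous_exp.measurable.comp
        (((measurable_const.add (measurable_fst.pow measurable_const)).mul measurable_snd).neg))
  rw [MeasureTheory.integrable_prod_iff hHm]
  constructor
  · filter_upwards [ae_restrict_mem measurableSet_Ioi] with s hs
    exact exp_section_integrable (by positivity)
  · apply MeasureTheory.Integrable.congr (J_integrableOn ha)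
    filter_upwards [ae_restrict_mem measurableSet_Ioi] with s hs
    have hs0 : (0:ℝ) < s := hs
    have hnn : ∀ u ∈ Ioi (0:ℝ), ‖s ^ (a-1) * Real.exp (-((1 + s ^ 2) * u))‖
        = s ^ (a-1) * Real.exp (-((1 + s ^ 2) * u)) := fun u _ =>
      Real.norm_of_nonneg (mul_nonneg (Real.rpow_nonneg hs0.le _) (Real.exp_nonneg _))
    rw [show (∫ u in Ioi (0:ℝ), ‖s ^ (a-1) * Real.exp (-((1 + s ^ 2) * u))‖)
        = ∫ u in Ioi (0:ℝ), s ^ (a-1) * Real.exp (-((1 + s ^ 2) * u)) from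
      setIntegral_congr_fun measurableSet_Ioi hnn,
      exp_section_value (by positivity)]

lemma fubini_two {a : ℝ} (ha : a ∈ Ioo (0:ℝ) 2) :
    (∫ s in Ioi (0:ℝ), s ^ (a - 1) / (1 + s ^ 2))
      = Real.Gamma (a/2) * Real.Gamma (1 - a/2) / 2 := by
  have swap := MeasureTheory.integral_integral_swap
    (f := fun s u : ℝ => s ^ (a-1) * Real.exp (-((1 + s ^ 2) * u)))
    (μ := volume.restrict (Ioi (0:ℝ))) (ν := volume.restrict (Ioi (0:ℝ)))
    (H2_integrable ha)
  have hL : (∫ s, ∫ u, s ^ (a-1) * Real.exp (-((1 + s ^ 2) * u))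
        ∂(volume.restrict (Ioi (0:ℝ))) ∂(volume.restrict (Ioi (0:ℝ))))
      = ∫ s in Ioi (0:ℝ), s ^ (a - 1) / (1 + s ^ 2) :=
    setIntegral_congr_fun measurableSet_Ioi (fun s _ => exp_section_value (by positivity))
  have hR : (∫ u, ∫ s, s ^ (a-1) * Real.exp (-((1 + s ^ 2) * u))
        ∂(volume.restrict (Ioi (0:ℝ))) ∂(volume.restrict (Ioi (0:ℝ))))
      = Real.Gamma (a/2) * Real.Gamma (1 - a/2) / 2 := by
    have hinner : ∀ u ∈ Ioi (0:ℝ), (∫ s in Ioi (0:ℝ), s ^ (a-1) * Real.exp (-((1 + s ^ 2) * u)))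
        = (Real.Gamma (a/2) / 2) * (u ^ ((1 - a/2) - 1) * Real.exp (-(1 * u))) := by
      intro u hu
      have hu0 : (0:ℝ) < u := hu
      have hcomm : ∀ s ∈ Ioi (0:ℝ), s ^ (a-1) * Real.exp (-((1 + s ^ 2) * u))
          = Real.exp (-u) * (s ^ (a-1) * Real.exp (-u * s ^ (2:ℝ))) := by
        intro s hs
        rw [Real.rpow_two]
        rw [show (-((1 + s^2) * u)) = (-u) + (-u * s^2) by ring, Real.exp_add]
        ring
      rw [setIntegral_congr_fun measurableSet_Ioi hcomm, MeasureTheory.integral_const_mul,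
        integral_rpow_mul_exp_neg_mul_rpow zero_lt_two (by linarith [ha.1]) hu0]
      have he : -(a - 1 + 1) / 2 = (1 - a/2) - 1 := by ring
      have h2 : (a - 1 + 1) / 2 = a/2 := by ring
      rw [he, h2, show -(1 * u) = -u from by ring]
      ring
    rw [setIntegral_congr_fun measurableSet_Ioi hinner, MeasureTheory.integral_const_mul,
      Real.integral_rpow_mul_exp_neg_mul_Ioi (by linarith [ha.2]) zero_lt_one]
    rw [one_div_one, Real.one_rpow]
    ring
  rw [← hL, swap, hR]



lemma amgm_sqrt {A B : ℝ} (hA : 0 ≤ A) (hB : 0 ≤ B) :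
    Real.sqrt (A * B) ≤ (A + B) / 2 := by
  nlinarith [Real.sq_sqrt hA, Real.sq_sqrt hB, Real.sqrt_nonneg A, Real.sqrt_nonneg B,
    sq_nonneg (Real.sqrt A - Real.sqrt B), Real.sqrt_mul_self hA,
    Real.sqrt_mul hA B]

lemma amgm_sqrt_strict {A B : ℝ} (hA : 0 ≤ A) (hB : 0 ≤ B) (hAB : A ≠ B) :
    Real.sqrt (A * B) < (A + B) / 2 := by
  have h1 : Real.sqrt A ≠ Real.sqrt B := by
    intro h
    exact hAB (by rw [← Real.sq_sqrt hA, ← Real.sq_sqrt hB, h])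
  have h2 : 0 < (Real.sqrt A - Real.sqrt B)^2 := by
    have := sub_ne_zero.mpr h1
    positivity
  nlinarith [Real.sq_sqrt hA, Real.sq_sqrt hB, Real.sqrt_mul hA B]

lemma sqrt_prod_eq {l α β : ℝ} (hl : 0 < l) {t : ℝ} (ht0 : 0 < t) :
    Real.sqrt ((l * ((1 - Real.cos t) * t ^ (-1 - α))) * (l⁻¹ * ((1 - Real.cos t) * t ^ (-1 - β))))
      = (1 - Real.cos t) * t ^ (-1 - (α + β)/2) := by
  have h1 : (l * ((1 - Real.cos t) * t ^ (-1 - α))) * (l⁻¹ * ((1 - Real.cos t) * t ^ (-1 - β)))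
      = (1 - Real.cos t)^2 * t ^ ((-1 - α) + (-1 - β)) := by
    rw [Real.rpow_add ht0]
    field_simp
  rw [h1, Real.sqrt_mul (sq_nonneg _), Real.sqrt_sq (one_sub_cos_nonneg t),
    Real.sqrt_eq_rpow, ← Real.rpow_mul ht0.le]
  congr 1
  ring

lemma Ifn_CS {α β : ℝ} (hα : α ∈ Ioo (0:ℝ) 2) (hβ : β ∈ Ioo (0:ℝ) 2) (hne : α ≠ β) :
    Ifn ((α + β)/2) < Real.sqrt (Ifn α * Ifn β) := by
  have hm : (α + β)/2 ∈ Ioo (0:ℝ) 2 := by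
    constructor <;> [linarith [hα.1, hβ.1]; linarith [hα.2, hβ.2]]
  have hIα := Ifn_pos hα
  have hIβ := Ifn_pos hβ
  set l : ℝ := Real.sqrt (Ifn β / Ifn α) with hldef
  have hl : 0 < l := Real.sqrt_pos.mpr (by positivity)
  -- the gap function
  set g : ℝ → ℝ := fun t =>
    (l * ((1 - Real.cos t) * t ^ (-1 - α)) + l⁻¹ * ((1 - Real.cos t) * t ^ (-1 - β))) / 2
      - (1 - Real.cos t) * t ^ (-1 - (α + β)/2) with hgdef
  have hgint : IntegrableOn g (Ioi (0:ℝ)) :=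
    ((((Ifn_integrableOn hα).const_mul l).add
      ((Ifn_integrableOn hβ).const_mul l⁻¹)).div_const 2).sub (Ifn_integrableOn hm)
  have hgnonneg : ∀ t : ℝ, 0 < t → 0 ≤ g t := by
    intro t ht0
    have h1 := amgm_sqrt
      (A := l * ((1 - Real.cos t) * t ^ (-1 - α)))
      (B := l⁻¹ * ((1 - Real.cos t) * t ^ (-1 - β)))
      (mul_nonneg hl.le (mul_nonneg (one_sub_cos_nonneg t) (Real.rpow_nonneg ht0.le _)))
      (mul_nonneg (inv_nonneg.mpr hl.le) (mul_nonneg (one_sub_cos_nonneg t) (Real.rpow_nonneg ht0.le _)))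
    rw [sqrt_prod_eq hl ht0] at h1
    simp only [hgdef]
    linarith
  -- strict positivity of the integral
  have hS : volume {t : ℝ | 0 < t ∧ l * t ^ (-1 - α) = l⁻¹ * t ^ (-1 - β)} = 0 := by
    apply Set.Subsingleton.measure_zero
    intro t1 h1 t2 h2
    have key : ∀ t : ℝ, 0 < t → l * t ^ (-1 - α) = l⁻¹ * t ^ (-1 - β) →
        Real.log t * (α - β) = 2 * Real.log l := by
      intro t ht heq
      have h3 := congrArg Real.log heq
      rw [Real.log_mul hl.ne' (Real.rpow_pos_of_pos ht _).ne',
        Real.log_mul (inv_ne_zero hl.ne') (Real.rpow_pos_of_pos ht _).ne',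
        Real.log_rpow ht, Real.log_rpow ht, Real.log_inv] at h3
      nlinarith
    have k1 := key t1 h1.1 h1.2
    have k2 := key t2 h2.1 h2.2
    have : Real.log t1 = Real.log t2 := by
      have hab : α - β ≠ 0 := sub_ne_zero.mpr hne
      exact mul_right_cancel₀ hab (k1.trans k2.symm)
    calc t1 = Real.exp (Real.log t1) := (Real.exp_log h1.1).symm
      _ = Real.exp (Real.log t2) := by rw [this]
      _ = t2 := Real.exp_log h2.1
  have hpos : 0 < ∫ t in Ioi (0:ℝ), g t := by
    rw [setIntegral_pos_iff_support_of_nonneg_ae ?hnn hgint]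
    case hnn =>
      filter_upwards [ae_restrict_mem measurableSet_Ioi] with t ht
      exact hgnonneg t ht
    refine lt_of_lt_of_le ?_ (measure_mono (?_ :
      Ioo (π/2) π \ {t : ℝ | 0 < t ∧ l * t ^ (-1 - α) = l⁻¹ * t ^ (-1 - β)}
        ⊆ Function.support g ∩ Ioi 0))
    · rw [measure_diff_null hS, Real.volume_Ioo]
      simp only [ENNReal.ofReal_pos]
      linarith [Real.pi_pos]
    · rintro t ⟨ht, htS⟩
      have hπ := Real.pi_pos
      have ht0 : 0 < t := lt_trans (by linarith) ht.1
      have hct : Real.cos t < 1 := by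
        have := Real.cos_nonpos_of_pi_div_two_le_of_le ht.1.le (by linarith [ht.2])
        linarith
      have hANB : l * ((1 - Real.cos t) * t ^ (-1 - α))
          ≠ l⁻¹ * ((1 - Real.cos t) * t ^ (-1 - β)) := by
        intro h
        apply htS
        refine ⟨ht0, ?_⟩
        have hc : (0:ℝ) < 1 - Real.cos t := by linarith
        have h' : (1 - Real.cos t) * (l * t ^ (-1 - α))
            = (1 - Real.cos t) * (l⁻¹ * t ^ (-1 - β)) := by ring_nf; ring_nf at h; linarith
        exact mul_left_cancel₀ hc.ne' h'
      have h1 := amgm_sqrt_strict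
        (A := l * ((1 - Real.cos t) * t ^ (-1 - α)))
        (B := l⁻¹ * ((1 - Real.cos t) * t ^ (-1 - β)))
        (mul_nonneg hl.le (mul_nonneg (one_sub_cos_nonneg t) (Real.rpow_nonneg ht0.le _)))
        (mul_nonneg (inv_nonneg.mpr hl.le) (mul_nonneg (one_sub_cos_nonneg t) (Real.rpow_nonneg ht0.le _))) hANB
      rw [sqrt_prod_eq hl ht0] at h1
      constructor
      · simp only [Function.mem_support, hgdef]
        intro h0
        have : (l * ((1 - Real.cos t) * t ^ (-1 - α)) + l⁻¹ * ((1 - Real.cos t) * t ^ (-1 - β))) / 2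
            - (1 - Real.cos t) * t ^ (-1 - (α + β)/2) = 0 := h0
        linarith
      · exact ht0
  -- compute the integral of g
  have hcalc : (∫ t in Ioi (0:ℝ), g t)
      = (l * Ifn α + l⁻¹ * Ifn β) / 2 - Ifn ((α + β)/2) := by
    have hint1 : Integrable (fun t : ℝ => l * ((1 - Real.cos t) * t ^ (-1 - α))
        + l⁻¹ * ((1 - Real.cos t) * t ^ (-1 - β))) (volume.restrict (Ioi (0:ℝ))) :=
      ((Ifn_integrableOn hα).const_mul l).add ((Ifn_integrableOn hβ).const_mul l⁻¹)
    have hint2 : Integrable (fun t : ℝ => (l * ((1 - Real.cos t) * t ^ (-1 - α))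
        + l⁻¹ * ((1 - Real.cos t) * t ^ (-1 - β))) / 2) (volume.restrict (Ioi (0:ℝ))) :=
      hint1.div_const 2
    rw [hgdef]
    rw [MeasureTheory.integral_sub hint2 (Ifn_integrableOn hm)]
    rw [MeasureTheory.integral_div]
    rw [MeasureTheory.integral_add ((Ifn_integrableOn hα).const_mul l)
      ((Ifn_integrableOn hβ).const_mul l⁻¹)]
    rw [MeasureTheory.integral_const_mul, MeasureTheory.integral_const_mul]
    rfl
  have hmean : (l * Ifn α + l⁻¹ * Ifn β) / 2 = Real.sqrt (Ifn α * Ifn β) := by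
    have h1 : l * Ifn α = Real.sqrt (Ifn α * Ifn β) := by
      rw [hldef, ← Real.sqrt_sq hIα.le, ← Real.sqrt_mul (by positivity)]
      congr 1
      field_simp
      rw [Real.sq_sqrt (by positivity)]
    have h2 : l⁻¹ * Ifn β = Real.sqrt (Ifn α * Ifn β) := by
      rw [hldef, ← Real.sqrt_inv, inv_div, ← Real.sqrt_sq hIβ.le,
        ← Real.sqrt_mul (by positivity)]
      congr 1
      field_simp
      rw [Real.sq_sqrt (by positivity)]
    rw [h1, h2]
    ring
  rw [hcalc, hmean] at hpos
  linarith



lemma sin_half_pos {a : ℝ} (ha : a ∈ Ioo (0:ℝ) 2) : 0 < Real.sin (π * a / 2) := by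
  apply Real.sin_pos_of_pos_of_lt_pi
  · have := Real.pi_pos; nlinarith [ha.1]
  · have := Real.pi_pos; nlinarith [ha.2]

lemma F_eq {a : ℝ} (ha : a ∈ Ioo (0:ℝ) 2) :
    Real.Gamma (a + 1) * Real.sin (π * a / 2) = π / (2 * Ifn a) := by
  have hsin : 0 < Real.sin (π * a / 2) := sin_half_pos ha
  have hI := Ifn_pos ha
  have h1 : Real.Gamma (a + 1) * Ifn a = π / Real.sin (π * a / 2) / 2 := by
    rw [fubini_one ha, fubini_two ha, Real.Gamma_mul_Gamma_one_sub (a/2)]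
    congr 2
    ring
  rw [eq_div_iff (by positivity)]
  have h2 : Real.Gamma (a + 1) * Ifn a * (Real.sin (π * a / 2) * 2) = π := by
    rw [h1]; field_simp
  linear_combination h2

theorem two_D_lt_one (x y : ℝ) (hx : x ∈ Set.Ioc (0 : ℝ) 1) (hy : y ∈ Set.Ioc (0 : ℝ) 1)
    (hxy : x ≠ y) :
    2 * (Real.sqrt (Real.Gamma (2 * x + 1) * Real.sin (Real.pi * x)) *
          Real.sqrt (Real.Gamma (2 * y + 1) * Real.sin (Real.pi * y)) /
        (2 * Real.Gamma (x + y + 1) * Real.sin (Real.pi * (x + y) / 2))) < 1 := by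
  rcases eq_or_lt_of_le hx.2 with hx1 | hx1
  · subst hx1
    norm_num [Real.sin_pi]
  rcases eq_or_lt_of_le hy.2 with hy1 | hy1
  · subst hy1
    norm_num [Real.sin_pi]
  -- main case
  have hax : (2*x) ∈ Ioo (0:ℝ) 2 := ⟨by linarith [hx.1], by linarith⟩
  have hay : (2*y) ∈ Ioo (0:ℝ) 2 := ⟨by linarith [hy.1], by linarith⟩
  have ham : (x + y) ∈ Ioo (0:ℝ) 2 := ⟨by linarith [hx.1, hy.1], by linarith⟩
  have hIx := Ifn_pos hax
  have hIy := Ifn_pos hay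
  have hIm := Ifn_pos ham
  have hA : Real.Gamma (2*x + 1) * Real.sin (π * x) = π / (2 * Ifn (2*x)) := by
    have := F_eq hax
    rw [show π * (2*x) / 2 = π * x by ring] at this
    exact this
  have hB : Real.Gamma (2*y + 1) * Real.sin (π * y) = π / (2 * Ifn (2*y)) := by
    have := F_eq hay
    rw [show π * (2*y) / 2 = π * y by ring] at this
    exact this
  have hC : Real.Gamma (x + y + 1) * Real.sin (π * (x + y) / 2) = π / (2 * Ifn (x+y)) :=
    F_eq ham
  have hCS : Ifn (x + y) < Real.sqrt (Ifn (2*x) * Ifn (2*y)) := by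
    have := Ifn_CS hax hay (by intro h; exact hxy (by linarith))
    rw [show (2*x + 2*y)/2 = x + y by ring] at this
    exact this
  have hπ := Real.pi_pos
  have hCpos : 0 < Real.Gamma (x + y + 1) * Real.sin (π * (x + y) / 2) := by
    rw [hC]; positivity
  have hsqrtpos : 0 < Real.sqrt (Ifn (2*x) * Ifn (2*y)) := Real.sqrt_pos.mpr (by positivity)
  -- numerator bound
  have hnum : Real.sqrt (Real.Gamma (2 * x + 1) * Real.sin (π * x)) *
      Real.sqrt (Real.Gamma (2 * y + 1) * Real.sin (π * y))
      < Real.Gamma (x + y + 1) * Real.sin (π * (x + y) / 2) := by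
    rw [hA, hB, hC, ← Real.sqrt_mul (by positivity)]
    rw [show π / (2 * Ifn (2*x)) * (π / (2 * Ifn (2*y)))
        = (π / (2 * Real.sqrt (Ifn (2*x) * Ifn (2*y))))^2 * 1 from ?_]
    · rw [mul_one, Real.sqrt_sq (by positivity)]
      apply div_lt_div_of_pos_left hπ (by positivity)
      nlinarith [hCS, hIm, hsqrtpos]
    · rw [div_pow, mul_pow, Real.sq_sqrt (by positivity : 0 ≤ Ifn (2*x) * Ifn (2*y))]
      field_simp
  have hG : 0 < Real.Gamma (x + y + 1) := Real.Gamma_pos_of_pos (by linarith [hx.1, hy.1])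
  have hS : 0 < Real.sin (π * (x + y) / 2) := sin_half_pos ham
  have hrw : 2 * (Real.sqrt (Real.Gamma (2 * x + 1) * Real.sin (π * x)) *
        Real.sqrt (Real.Gamma (2 * y + 1) * Real.sin (π * y)) /
          (2 * Real.Gamma (x + y + 1) * Real.sin (π * (x + y) / 2)))
      = Real.sqrt (Real.Gamma (2 * x + 1) * Real.sin (π * x)) *
        Real.sqrt (Real.Gamma (2 * y + 1) * Real.sin (π * y)) /
          (Real.Gamma (x + y + 1) * Real.sin (π * (x + y) / 2)) := by
    field_simp
  rw [hrw, div_lt_one (by positivity)]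
  exact hnum
end
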